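/- Fix θ ∈ (−π/2, π/2) and let f : ℝ → ℝ be twice differentiable with f''(x) = 6·(sec θ)^{2/3} − 96·f(x)² for all x, f(0) = r₂(θ) and f'(0) = 0. Then f is even, i.e. f(−x) = f(x) for all x, and f is periodic with period 2·ρ₊(θ), i.e. f(x + 2·ρ₊(θ)) = f(x) for all x ∈ ℝ. -/

import Mathlib

/-!
Energy conservation gives `f'² = 64 (r₃ - f)(f - r₂)(f - r₁)` with `r₁ < r₂ < r₃`. Since
`f''(0) > 0`, `f` starts increasing from `r₂`, and while `f' > 0` the substitution `a = f x`
shows that `f` reaches the value `f x` at time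
`x = (1/8) ∫_{r₂}^{f x} ((r₃ - a)(a - r₂)(a - r₁))^{-1/2} da`.
These times are bounded by the finite integral `ρ₊`, so `f'` has a first positive zero `T`; there
`f T = r₃`, hence `T = ρ₊`. The equation is autonomous and reversible, so uniqueness for the
system `(f, f')` makes `f` symmetric about each critical point, here `0` and `ρ₊`; the two
reflections compose to the translation by `2ρ₊`.
-/

open Real MeasureTheory

/-- `sec θ = (cos θ)⁻¹`. -/
noncomputable def sec (θ : ℝ) : ℝ := (Real.cos θ)⁻¹

/-- `r₁(θ) = (1/2)·sin(θ/3 − 2π/3)·(sec θ)^{1/3}`. -/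
noncomputable def r₁ (θ : ℝ) : ℝ :=
  (1/2) * Real.sin (θ/3 - 2*π/3) * (sec θ) ^ ((1:ℝ)/3)

/-- `r₂(θ) = (1/2)·sin(θ/3)·(sec θ)^{1/3}`. -/
noncomputable def r₂ (θ : ℝ) : ℝ :=
  (1/2) * Real.sin (θ/3) * (sec θ) ^ ((1:ℝ)/3)

/-- `r₃(θ) = (1/2)·sin(θ/3 + 2π/3)·(sec θ)^{1/3}`. -/
noncomputable def r₃ (θ : ℝ) : ℝ :=
  (1/2) * Real.sin (θ/3 + 2*π/3) * (sec θ) ^ ((1:ℝ)/3)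

/-- `ρ₊(θ)`, a Lebesgue integral over the open interval `(r₂(θ), r₃(θ))`. -/
noncomputable def ρp (θ : ℝ) : ℝ :=
  (1/8) * ∫ a in Set.Ioo (r₂ θ) (r₃ θ),
    ((r₃ θ - a) * (a - r₂ θ) * (a - r₁ θ)) ^ (-(1:ℝ)/2)

open Set Filter Topology

section ODE

theorem ODE_solution_unique_univ_of_locallyLipschitz {E : Type*} [NormedAddCommGroup E]
    [NormedSpace ℝ E] {v : E → E} (hv : LocallyLipschitz v) {γ₁ γ₂ : ℝ → E}
    (hγ₁ : ∀ t, HasDerivAt γ₁ (v (γ₁ t)) t) (hγ₂ : ∀ t, HasDerivAt γ₂ (v (γ₂ t)) t)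
    {t₀ : ℝ} (heq : γ₁ t₀ = γ₂ t₀) : γ₁ = γ₂ := by
  ext1 t
  obtain ⟨A, B, ht, ht₀⟩ : ∃ A B, t ∈ Ioo A B ∧ t₀ ∈ Ioo A B :=
    ⟨min t t₀ - 1, max t t₀ + 1, by constructor <;> constructor <;> grind⟩
  set K := γ₁ '' Icc A B ∪ γ₂ '' Icc A B
  have hK : IsCompact K :=
    (isCompact_Icc.image_of_continuousOn fun s _ ↦ (hγ₁ s).continuousAt.continuousWithinAt).union
      (isCompact_Icc.image_of_continuousOn fun s _ ↦ (hγ₂ s).continuousAt.continuousWithinAt)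
  obtain ⟨L, hL⟩ := hv.locallyLipschitzOn.exists_lipschitzOnWith_of_compact hK
  exact ODE_solution_unique_of_mem_Ioo (v := fun _ ↦ v) (s := fun _ ↦ K) (fun _ _ ↦ hL) ht₀
    (fun s hs ↦ ⟨hγ₁ s, .inl ⟨s, Ioo_subset_Icc_self hs, rfl⟩⟩)
    (fun s hs ↦ ⟨hγ₂ s, .inr ⟨s, Ioo_subset_Icc_self hs, rfl⟩⟩) heq ht

variable {F f : ℝ → ℝ}

/-- Time reversal: `s ↦ (f (c - s), -f' (c - s))` solves the same first-order system as
`s ↦ (f (c + s), f' (c + s))` and agrees with it at `s = 0`. -/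
theorem eq_comp_reflect_of_deriv_eq_zero (hF : LocallyLipschitz F)
    (hf : Differentiable ℝ f) (hf' : Differentiable ℝ (deriv f))
    (hODE : ∀ x, deriv (deriv f) x = F (f x)) {c : ℝ} (hc : deriv f c = 0) (x : ℝ) :
    f (c + x) = f (c - x) := by
  have hv : LocallyLipschitz fun p : ℝ × ℝ ↦ (p.2, F p.1) :=
    LipschitzWith.prod_snd.locallyLipschitz.prodMk
      (hF.comp LipschitzWith.prod_fst.locallyLipschitz)
  have hf_deriv : ∀ y, HasDerivAt f (deriv f y) y := fun y ↦ (hf y).hasDerivAt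
  have hf'_deriv : ∀ y, HasDerivAt (deriv f) (F (f y)) y := fun y ↦ hODE y ▸ (hf' y).hasDerivAt
  have hforward : ∀ t, HasDerivAt (fun s ↦ (f (c + s), deriv f (c + s)))
      (deriv f (c + t), F (f (c + t))) t := fun t ↦
    ((hf_deriv _).comp_const_add c t).prodMk ((hf'_deriv _).comp_const_add c t)
  have hbackward : ∀ t, HasDerivAt (fun s ↦ (f (c - s), -deriv f (c - s)))
      (-deriv f (c - t), F (f (c - t))) t := fun t ↦ by
    simpa using ((hf_deriv _).comp_const_sub c t).prodMk ((hf'_deriv _).comp_const_sub c t).neg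
  have := ODE_solution_unique_univ_of_locallyLipschitz hv hforward hbackward (t₀ := 0)
    (by simp [hc])
  exact congrArg Prod.fst (congrFun this x)

theorem deriv_sq_sub_potential_eq {Φ : ℝ → ℝ} (hΦ : ∀ a, HasDerivAt Φ (F a) a)
    (hf : Differentiable ℝ f) (hf' : Differentiable ℝ (deriv f))
    (hODE : ∀ x, deriv (deriv f) x = F (f x)) (x y : ℝ) :
    deriv f x ^ 2 - 2 * Φ (f x) = deriv f y ^ 2 - 2 * Φ (f y) := by
  have hE : ∀ t, HasDerivAt (fun s ↦ deriv f s ^ 2 - 2 * Φ (f s)) 0 t := fun t ↦ by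
    refine ((((hf' t).hasDerivAt).pow 2).sub
      (((hΦ (f t)).comp t (hf t).hasDerivAt).const_mul 2)).congr_deriv ?_
    rw [hODE]
    ring
  exact is_const_of_deriv_eq_zero (fun t ↦ (hE t).differentiableAt) (fun t ↦ (hE t).deriv) x y

end ODE

theorem HasDerivAt.eventually_pos_nhdsGT {g : ℝ → ℝ} {g' x : ℝ} (hg : HasDerivAt g g' x)
    (hx : g x = 0) (hg' : 0 < g') : ∀ᶠ t in 𝓝[>] x, 0 < g t := by
  have hslope : Tendsto (slope g x) (𝓝[>] x) (𝓝 g') :=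
    (hasDerivWithinAt_iff_tendsto_slope' self_notMem_Ioi).1 hg.hasDerivWithinAt
  filter_upwards [hslope.eventually (lt_mem_nhds hg'), self_mem_nhdsWithin] with t ht hxt
  rwa [slope_pos_iff_of_le (le_of_lt hxt), hx] at ht

theorem exists_zero_of_eventually_pos_nhdsGT {g : ℝ → ℝ} (hg : Continuous g) {a X : ℝ}
    (hpos : ∀ᶠ x in 𝓝[>] a, 0 < g x) (haX : a < X) (hX : g X ≤ 0) :
    ∃ T, a < T ∧ g T = 0 ∧ ∀ x ∈ Ioo a T, 0 < g x := by
  obtain ⟨b, hab, hb⟩ := mem_nhdsGT_iff_exists_Ioc_subset.1 hpos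
  have hbX : b < X := lt_of_not_ge fun hXb ↦ (hb ⟨haX, hXb⟩ : 0 < g X).not_ge hX
  set S := Icc b X ∩ {x | g x ≤ 0}
  have hS : IsCompact S := isCompact_Icc.inter_right (isClosed_le hg continuous_const)
  have hT : sInf S ∈ S := hS.sInf_mem ⟨X, ⟨hbX.le, le_rfl⟩, hX⟩
  have hT_le : ∀ x ∈ S, sInf S ≤ x := fun x hx ↦ csInf_le hS.bddBelow hx
  obtain ⟨c, hc, hgc⟩ := intermediate_value_Icc' hT.1.1 hg.continuousOn
    ⟨hT.2, (hb ⟨hab, le_rfl⟩ : 0 < g b).le⟩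
  have hcT : c = sInf S := le_antisymm hc.2 (hT_le c ⟨⟨hc.1, hc.2.trans hT.1.2⟩, hgc.le⟩)
  refine ⟨sInf S, hab.trans_le hT.1.1, hcT ▸ hgc, fun x hx ↦ ?_⟩
  by_contra! hgx
  rcases le_or_gt x b with hxb | hbx
  · exact (hb ⟨hx.1, hxb⟩ : 0 < g x).not_ge hgx
  · exact hx.2.not_ge (hT_le x ⟨⟨hbx.le, hx.2.le.trans hT.1.2⟩, hgx⟩)

theorem setIntegral_Ioo_image_eq_of_deriv_mul_comp_eq {f f' g : ℝ → ℝ} {a b c : ℝ}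
    (hab : a ≤ b) (hf : ContinuousOn f (Icc a b))
    (hderiv : ∀ x ∈ Ioo a b, HasDerivAt f (f' x) x) (hpos : ∀ x ∈ Ioo a b, 0 < f' x)
    (hc : ∀ x ∈ Ioo a b, f' x * g (f x) = c) :
    ∫ y in Ioo (f a) (f b), g y = (b - a) * c := by
  have hmono : StrictMonoOn f (Icc a b) := strictMonoOn_of_deriv_pos (convex_Icc a b) hf
    (by simpa only [interior_Icc] using fun x hx ↦ (hderiv x hx).deriv ▸ hpos x hx)
  have himage : f '' Ioo a b = Ioo (f a) (f b) := by
    refine (intermediate_value_Ioo hab hf).antisymm' ?_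
    rintro _ ⟨x, hx, rfl⟩
    exact ⟨hmono (left_mem_Icc.2 hab) (Ioo_subset_Icc_self hx) hx.1,
      hmono (Ioo_subset_Icc_self hx) (right_mem_Icc.2 hab) hx.2⟩
  rw [← himage, integral_image_eq_integral_abs_deriv_smul measurableSet_Ioo
    (fun x hx ↦ (hderiv x hx).hasDerivWithinAt) (hmono.injOn.mono Ioo_subset_Icc_self),
    setIntegral_congr_fun measurableSet_Ioo (g := fun _ ↦ c)
      (fun x hx ↦ by rw [smul_eq_mul, abs_of_pos (hpos x hx), hc x hx]),
    setIntegral_const, Real.volume_real_Ioo_of_le hab, smul_eq_mul]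

theorem mul_rpow_neg_half_of_sq_eq {c d q : ℝ} (hc : 0 < c) (hd : 0 < d)
    (h : d ^ 2 = c ^ 2 * q) : d * q ^ (-(1:ℝ)/2) = c := by
  have hq : q = (d / c) ^ 2 := by
    rw [div_pow, h]
    field_simp
  rw [hq, show (-(1:ℝ)/2) = -(1/2) by norm_num, rpow_neg (sq_nonneg _), ← sqrt_eq_rpow,
    sqrt_sq (by positivity)]
  field_simp

/-- `((q - a) * (a - p)) ^ (-1/2)` is the derivative of `arcsin ((2a - p - q) / (q - p))`. -/
theorem integrableOn_rpow_neg_half_mul_sub {p q : ℝ} (hpq : p < q) :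
    IntegrableOn (fun a ↦ ((q - a) * (a - p)) ^ (-(1:ℝ)/2)) (Ioo p q) := by
  set L := q - p
  have hL : 0 < L := sub_pos.2 hpq
  have hderiv : ∀ a ∈ Ioo p q, HasDerivAt (fun a ↦ arcsin ((2 * a - p - q) / L))
      (((q - a) * (a - p)) ^ (-(1:ℝ)/2)) a := by
    intro a ha
    have hP : 0 < (q - a) * (a - p) := mul_pos (sub_pos.2 ha.2) (sub_pos.2 ha.1)
    have hu : HasDerivAt (fun a ↦ (2 * a - p - q) / L) (2 / L) a := by
      simpa using ((((hasDerivAt_id a).const_mul 2).sub_const p).sub_const q).div_const L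
    have h1 : (2 * a - p - q) / L ≠ -1 := by
      rw [ne_eq, div_eq_iff hL.ne']; intro h; linarith [ha.1]
    have h2 : (2 * a - p - q) / L ≠ 1 := by
      rw [ne_eq, div_eq_iff hL.ne']; intro h; linarith [ha.2]
    have hsqrt : √(1 - ((2 * a - p - q) / L) ^ 2) = 2 / L * √((q - a) * (a - p)) := by
      rw [show 1 - ((2 * a - p - q) / L) ^ 2 = (2 / L) ^ 2 * ((q - a) * (a - p)) by
          field_simp; ring,
        sqrt_mul (sq_nonneg _), sqrt_sq (by positivity)]
    refine ((hasDerivAt_arcsin h1 h2).comp a hu).congr_deriv ?_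
    have := sqrt_pos.2 hP
    rw [hsqrt, show (-(1:ℝ)/2) = -(1/2) by norm_num, rpow_neg hP.le, ← sqrt_eq_rpow]
    field_simp
  exact (intervalIntegral.integrableOn_deriv_of_nonneg (by fun_prop) hderiv
    (fun a ha ↦ rpow_nonneg (mul_pos (sub_pos.2 ha.2) (sub_pos.2 ha.1)).le _)).mono_set
    Ioo_subset_Ioc_self

theorem integrableOn_rpow_neg_half_cubic {r₁ r₂ r₃ : ℝ} (h₁₂ : r₁ < r₂) (h₂₃ : r₂ < r₃) :
    IntegrableOn (fun a ↦ ((r₃ - a) * (a - r₂) * (a - r₁)) ^ (-(1:ℝ)/2)) (Ioo r₂ r₃) := by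
  refine Integrable.mono'
    ((integrableOn_rpow_neg_half_mul_sub h₂₃).const_mul ((r₂ - r₁) ^ (-(1:ℝ)/2)))
    ((Measurable.pow_const (by fun_prop) _).aestronglyMeasurable) ?_
  filter_upwards [ae_restrict_mem measurableSet_Ioo] with a ha
  have hP : 0 < (r₃ - a) * (a - r₂) := mul_pos (sub_pos.2 ha.2) (sub_pos.2 ha.1)
  have hr₁ : 0 < a - r₁ := by linarith [ha.1]
  rw [norm_of_nonneg (rpow_nonneg (mul_pos hP hr₁).le _), mul_rpow hP.le hr₁.le, mul_comm]
  exact mul_le_mul_of_nonneg_right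
    (rpow_le_rpow_of_nonpos (sub_pos.2 h₁₂) (by linarith [ha.1]) (by norm_num))
    (rpow_nonneg hP.le _)

section Trigonometry

variable {t : ℝ}

theorem sin_lt_sin_add_two_pi_div_three (ht : t ∈ Ioo (-(5 * π / 6)) (π / 6)) :
    sin t < sin (t + 2 * π / 3) := by
  have hsin : 0 < sin (π / 3) := sin_pos_of_pos_of_lt_pi (by positivity) (by linarith [pi_pos])
  have hcos : 0 < cos (t + π / 3) := cos_pos_of_mem_Ioo ⟨by linarith [ht.1], by linarith [ht.2]⟩
  have h := sin_sub_sin (t + 2 * π / 3) t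
  rw [show (t + 2 * π / 3 - t) / 2 = π / 3 by ring,
    show (t + 2 * π / 3 + t) / 2 = t + π / 3 by ring] at h
  linarith [mul_pos hsin hcos]

theorem sin_sub_two_pi_div_three_lt_sin (ht : t ∈ Ioo (-(π / 6)) (5 * π / 6)) :
    sin (t - 2 * π / 3) < sin t := by
  have hsin : 0 < sin (π / 3) := sin_pos_of_pos_of_lt_pi (by positivity) (by linarith [pi_pos])
  have hcos : 0 < cos (t - π / 3) := cos_pos_of_mem_Ioo ⟨by linarith [ht.1], by linarith [ht.2]⟩
  have h := sin_sub_sin t (t - 2 * π / 3)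
  rw [show (t - (t - 2 * π / 3)) / 2 = π / 3 by ring,
    show (t + (t - 2 * π / 3)) / 2 = t - π / 3 by ring] at h
  linarith [mul_pos hsin hcos]

theorem cos_two_pi_div_three : cos (2 * π / 3) = -(1 / 2) := by
  rw [show 2 * π / 3 = π - π / 3 by ring, cos_pi_sub, cos_pi_div_three]

end Trigonometry

section Roots

variable {θ : ℝ}

theorem sec_pos (hθ : θ ∈ Ioo (-(π / 2)) (π / 2)) : 0 < sec θ :=
  inv_pos.2 (cos_pos_of_mem_Ioo hθ)

theorem sec_rpow_two_thirds (hθ : θ ∈ Ioo (-(π / 2)) (π / 2)) :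
    sec θ ^ ((2:ℝ)/3) = (sec θ ^ ((1:ℝ)/3)) ^ 2 := by
  rw [← rpow_natCast, ← rpow_mul (sec_pos hθ).le]
  norm_num

theorem r₁_add_r₂_add_r₃ : r₁ θ + r₂ θ + r₃ θ = 0 := by
  rw [r₁, r₂, r₃, sin_sub, sin_add, cos_two_pi_div_three]
  ring

theorem r₁_mul_r₂_add_r₂_mul_r₃_add_r₃_mul_r₁ (hθ : θ ∈ Ioo (-(π / 2)) (π / 2)) :
    r₁ θ * r₂ θ + r₂ θ * r₃ θ + r₃ θ * r₁ θ = -(3 / 16) * sec θ ^ ((2:ℝ)/3) := by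
  have hα := sin_sq_add_cos_sq (2 * π / 3)
  rw [cos_two_pi_div_three] at hα
  rw [sec_rpow_two_thirds hθ, r₁, r₂, r₃, sin_sub, sin_add, cos_two_pi_div_three]
  linear_combination (sec θ ^ ((1:ℝ)/3)) ^ 2 / 4 *
    (-(cos (θ / 3) ^ 2) * hα - 3 / 4 * sin_sq_add_cos_sq (θ / 3))

theorem r₁_lt_r₂ (hθ : θ ∈ Ioo (-(π / 2)) (π / 2)) : r₁ θ < r₂ θ := by
  refine mul_lt_mul_of_pos_right (mul_lt_mul_of_pos_left ?_ one_half_pos)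
    (rpow_pos_of_pos (sec_pos hθ) _)
  exact sin_sub_two_pi_div_three_lt_sin ⟨by linarith [hθ.1], by linarith [hθ.2, pi_pos]⟩

theorem r₂_lt_r₃ (hθ : θ ∈ Ioo (-(π / 2)) (π / 2)) : r₂ θ < r₃ θ := by
  refine mul_lt_mul_of_pos_right (mul_lt_mul_of_pos_left ?_ one_half_pos)
    (rpow_pos_of_pos (sec_pos hθ) _)
  exact sin_lt_sin_add_two_pi_div_three ⟨by linarith [hθ.1, pi_pos], by linarith [hθ.2]⟩

end Roots

structure SolvesIVP (θ : ℝ) (f : ℝ → ℝ) : Prop where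
  differentiable : Differentiable ℝ f
  differentiable_deriv : Differentiable ℝ (deriv f)
  deriv_deriv : ∀ x, deriv (deriv f) x = 6 * sec θ ^ ((2:ℝ)/3) - 96 * f x ^ 2
  apply_zero : f 0 = r₂ θ
  deriv_zero : deriv f 0 = 0

namespace SolvesIVP

variable {θ : ℝ} {f : ℝ → ℝ}

theorem deriv_sq_eq (hsol : SolvesIVP θ f) (hθ : θ ∈ Ioo (-(π / 2)) (π / 2)) (x : ℝ) :
    deriv f x ^ 2 = 64 * (r₃ θ - f x) * (f x - r₂ θ) * (f x - r₁ θ) := by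
  set S := sec θ ^ ((2:ℝ)/3)
  have hΦ : ∀ a, HasDerivAt (fun a ↦ 6 * S * a - 32 * a ^ 3) (6 * S - 96 * a ^ 2) a :=
    fun a ↦ (((hasDerivAt_id a).const_mul (6 * S)).sub
      ((hasDerivAt_pow 3 a).const_mul 32)).congr_deriv (by ring)
  have h := deriv_sq_sub_potential_eq hΦ hsol.differentiable hsol.differentiable_deriv
    hsol.deriv_deriv x 0
  rw [hsol.apply_zero, hsol.deriv_zero] at h
  linear_combination h + 64 * (f x - r₂ θ) * r₁_mul_r₂_add_r₂_mul_r₃_add_r₃_mul_r₁ hθ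
    - 64 * (f x ^ 2 - r₂ θ ^ 2) * r₁_add_r₂_add_r₃

theorem eventually_deriv_pos (hsol : SolvesIVP θ f) (hθ : θ ∈ Ioo (-(π / 2)) (π / 2)) :
    ∀ᶠ x in 𝓝[>] 0, 0 < deriv f x := by
  refine (hsol.differentiable_deriv 0).hasDerivAt.eventually_pos_nhdsGT hsol.deriv_zero ?_
  have h : 6 * sec θ ^ ((2:ℝ)/3) - 96 * r₂ θ ^ 2 = 32 * (r₃ θ - r₂ θ) * (r₂ θ - r₁ θ) := by
    linear_combination 32 * r₁_mul_r₂_add_r₂_mul_r₃_add_r₃_mul_r₁ hθ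
      - 64 * r₂ θ * r₁_add_r₂_add_r₃
  rw [hsol.deriv_deriv, hsol.apply_zero, h]
  have := sub_pos.2 (r₁_lt_r₂ hθ)
  have := sub_pos.2 (r₂_lt_r₃ hθ)
  positivity

theorem r₂_lt_of_deriv_pos (hsol : SolvesIVP θ f) {X : ℝ} (hX : 0 < X)
    (hpos : ∀ x ∈ Ioo 0 X, 0 < deriv f x) : r₂ θ < f X := by
  have hmono := strictMonoOn_of_deriv_pos (convex_Icc 0 X)
    hsol.differentiable.continuous.continuousOn (by rwa [interior_Icc])
  exact hsol.apply_zero ▸ hmono (left_mem_Icc.2 hX.le) (right_mem_Icc.2 hX.le) hX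

theorem setIntegral_Ioo_r₂_eq_eight_mul (hsol : SolvesIVP θ f) (hθ : θ ∈ Ioo (-(π / 2)) (π / 2))
    {X : ℝ} (hX : 0 ≤ X) (hpos : ∀ x ∈ Ioo 0 X, 0 < deriv f x) :
    ∫ a in Ioo (r₂ θ) (f X), ((r₃ θ - a) * (a - r₂ θ) * (a - r₁ θ)) ^ (-(1:ℝ)/2) = 8 * X := by
  have h := setIntegral_Ioo_image_eq_of_deriv_mul_comp_eq hX
    hsol.differentiable.continuous.continuousOn (fun x _ ↦ (hsol.differentiable x).hasDerivAt)
    hpos (c := 8) (g := fun a ↦ ((r₃ θ - a) * (a - r₂ θ) * (a - r₁ θ)) ^ (-(1:ℝ)/2))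
    (fun x hx ↦ mul_rpow_neg_half_of_sq_eq (by norm_num) (hpos x hx)
      (by rw [hsol.deriv_sq_eq hθ]; ring))
  rw [hsol.apply_zero] at h
  linarith

theorem exists_deriv_nonpos (hsol : SolvesIVP θ f) (hθ : θ ∈ Ioo (-(π / 2)) (π / 2)) :
    ∃ X, 0 < X ∧ deriv f X ≤ 0 := by
  by_contra! hpos
  set X := |ρp θ| + 1
  have hX : 0 < X := by positivity
  have hpos' : ∀ x ∈ Ioo 0 X, 0 < deriv f x := fun x hx ↦ hpos x hx.1
  have hr₂ := hsol.r₂_lt_of_deriv_pos hX hpos'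
  have hr₃ : f X < r₃ θ := by
    have hprod : 0 < (f X - r₂ θ) * (f X - r₁ θ) :=
      mul_pos (by linarith) (by linarith [r₁_lt_r₂ hθ])
    nlinarith [hsol.deriv_sq_eq hθ X, pow_pos (hpos X hX) 2]
  have hle : 8 * X ≤ 8 * ρp θ := by
    rw [← hsol.setIntegral_Ioo_r₂_eq_eight_mul hθ hX.le hpos', ρp, ← mul_assoc,
      show (8:ℝ) * (1 / 8) = 1 by norm_num, one_mul]
    refine setIntegral_mono_set
      (integrableOn_rpow_neg_half_cubic (r₁_lt_r₂ hθ) (r₂_lt_r₃ hθ)) ?_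
      (Ioo_subset_Ioo_right hr₃.le).eventuallyLE
    filter_upwards [ae_restrict_mem measurableSet_Ioo] with a ha
    have h₁₂ := r₁_lt_r₂ hθ
    exact rpow_nonneg (mul_nonneg (mul_nonneg (by linarith [ha.2]) (by linarith [ha.1]))
      (by linarith [ha.1])) _
  linarith [le_abs_self (ρp θ)]

theorem deriv_ρp_eq_zero (hsol : SolvesIVP θ f) (hθ : θ ∈ Ioo (-(π / 2)) (π / 2)) :
    deriv f (ρp θ) = 0 := by
  obtain ⟨X, hX, hXnonpos⟩ := hsol.exists_deriv_nonpos hθ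
  obtain ⟨T, hT, hT0, hpos⟩ := exists_zero_of_eventually_pos_nhdsGT
    hsol.differentiable_deriv.continuous (hsol.eventually_deriv_pos hθ) hX hXnonpos
  have hr₂ := hsol.r₂_lt_of_deriv_pos hT hpos
  have hfT : f T = r₃ θ := by
    have h := hsol.deriv_sq_eq hθ T
    have hprod : 0 < (f T - r₂ θ) * (f T - r₁ θ) :=
      mul_pos (by linarith) (by linarith [r₁_lt_r₂ hθ])
    have h' : (r₃ θ - f T) * ((f T - r₂ θ) * (f T - r₁ θ)) = 0 := by
      rw [hT0] at h
      linear_combination -h / 64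
    linarith [(mul_eq_zero.1 h').resolve_right hprod.ne']
  have hρ : ρp θ = T := by
    have h := hsol.setIntegral_Ioo_r₂_eq_eight_mul hθ hT.le hpos
    rw [hfT] at h
    rw [ρp, h]
    ring
  rwa [hρ]

end SolvesIVP

/-- The solution `f` of `f'' = 6 (sec θ)^{2/3} − 96 f²`, `f(0) = r₂(θ)`,
`f'(0) = 0` is even and periodic of period `2ρ₊(θ)`. -/
theorem solution_even_periodic (θ : ℝ) (hθ : θ ∈ Set.Ioo (-(π/2)) (π/2))
    (f : ℝ → ℝ) (hf : Differentiable ℝ f) (hf' : Differentiable ℝ (deriv f))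
    (hODE : ∀ x, deriv (deriv f) x = 6 * (sec θ) ^ ((2:ℝ)/3) - 96 * (f x) ^ 2)
    (h0 : f 0 = r₂ θ) (h0' : deriv f 0 = 0) :
    (∀ x, f (-x) = f x) ∧ (∀ x, f (x + 2 * ρp θ) = f x) := by
  have hF : LocallyLipschitz fun a : ℝ ↦ 6 * sec θ ^ ((2:ℝ)/3) - 96 * a ^ 2 :=
    ContDiff.locallyLipschitz (𝕂 := ℝ) (by fun_prop)
  have hreflect : ∀ c, deriv f c = 0 → ∀ x, f (c + x) = f (c - x) :=
    fun _ ↦ eq_comp_reflect_of_deriv_eq_zero hF hf hf' hODE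
  have heven : ∀ x, f (-x) = f x := fun x ↦ by simpa using (hreflect 0 h0' x).symm
  have hρ := SolvesIVP.deriv_ρp_eq_zero ⟨hf, hf', hODE, h0, h0'⟩ hθ
  refine ⟨heven, fun x ↦ ?_⟩
  calc f (x + 2 * ρp θ) = f (ρp θ + (x + ρp θ)) := by ring_nf
    _ = f (ρp θ - (x + ρp θ)) := hreflect _ hρ _
    _ = f (-x) := by ring_nf
    _ = f x := heven x
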